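/- arXiv:2102.13582 — 3 statements merged into one kernel-verified Lean document; each statement's English description precedes it below -/
import Mathlib

section
/- Let π be a permutation of Fin n with permutation matrix P, let S₁ ∈ Matrix (Fin n) (Fin n) ℝ, let S₂ = P * S₁ * Pᵀ, and let S = Matrix.fromBlocks S₁ 0 0 S₂. Then for every i ∈ Fin n there exists a permutation σ of Fin n ⊕ Fin n such that for all k ∈ Fin n ⊕ Fin n, S (Sum.inl i) (σ k) = S (Sum.inr (π i)) k; that is, row Sum.inl i and row Sum.inr (π i) of S are equal up to a permutation of their entries. -/
open Matrix

theorem rows_equal_up_to_permutation (n : ℕ) (π : Equiv.Perm (Fin n))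
    (P : Matrix (Fin n) (Fin n) ℝ)
    (hP : ∀ i j, P i j = if i = π j then 1 else 0)
    (S₁ S₂ : Matrix (Fin n) (Fin n) ℝ) (hS₂ : S₂ = P * S₁ * Pᵀ)
    (S : Matrix (Fin n ⊕ Fin n) (Fin n ⊕ Fin n) ℝ)
    (hS : S = Matrix.fromBlocks S₁ 0 0 S₂) (i : Fin n) :
    ∃ σ : Equiv.Perm (Fin n ⊕ Fin n),
      ∀ k : Fin n ⊕ Fin n, S (Sum.inl i) (σ k) = S (Sum.inr (π i)) k := by
  have hS₂' : ∀ j, S₂ (π i) j = S₁ i (π⁻¹ j) := by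
    intro j
    subst hS₂
    simp only [Matrix.mul_apply, Matrix.transpose_apply, hP]
    rw [Finset.sum_eq_single (π⁻¹ j)]
    · rw [Finset.sum_eq_single i]
      · simp
      · intro b _ hb
        simp [Ne.symm hb]
      · simp
    · intro b _ hb
      have : ¬ j = π b := fun h => hb (by simp [h])
      simp [this]
    · simp
  refine ⟨(Equiv.sumComm (Fin n) (Fin n)).trans (Equiv.sumCongr (π⁻¹ : Equiv.Perm (Fin n)) (Equiv.refl _)), ?_⟩
  intro k
  cases k with
  | inl j => simp [hS]
  | inr j => simp [hS, hS₂']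
end

section
/- Let π be a permutation of Fin n with permutation matrix P, let S₁ ∈ Matrix (Fin n) (Fin n) ℝ, let S₂ = P * S₁ * Pᵀ, and let S = Matrix.fromBlocks S₁ 0 0 S₂. Let α be any type and let E : ((Fin n ⊕ Fin n) → ℝ) → α be any permutation-invariant function, i.e. E (x ∘ σ) = E x for every permutation σ of Fin n ⊕ Fin n and every x : (Fin n ⊕ Fin n) → ℝ. Then for every i ∈ Fin n, applying E to the rows of S yields identical values for the automorphic nodes: E (S (Sum.inl i)) = E (S (Sum.inr (π i))). -/
open Matrix

theorem perm_invariant_embedding_structural (n : ℕ) (π : Equiv.Perm (Fin n))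
    (P : Matrix (Fin n) (Fin n) ℝ)
    (hP : ∀ i j, P i j = if i = π j then 1 else 0)
    (S₁ S₂ : Matrix (Fin n) (Fin n) ℝ) (hS₂ : S₂ = P * S₁ * Pᵀ)
    (S : Matrix (Fin n ⊕ Fin n) (Fin n ⊕ Fin n) ℝ)
    (hS : S = Matrix.fromBlocks S₁ 0 0 S₂)
    {α : Type*} (E : ((Fin n ⊕ Fin n) → ℝ) → α)
    (hE : ∀ (σ : Equiv.Perm (Fin n ⊕ Fin n)) (x : (Fin n ⊕ Fin n) → ℝ),
      E (x ∘ σ) = E x)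
    (i : Fin n) :
    E (S (Sum.inl i)) = E (S (Sum.inr (π i))) := by
  have hS₂' : ∀ a b : Fin n, S₂ (π a) (π b) = S₁ a b := by
    intro a b
    subst hS₂
    simp [Matrix.mul_apply, Matrix.transpose_apply, hP, EmbeddingLike.apply_eq_iff_eq,
      ite_mul, mul_ite, Finset.sum_ite_eq, Finset.sum_ite_eq']
  let σ : Equiv.Perm (Fin n ⊕ Fin n) :=
    (Equiv.sumCongr (π : Equiv.Perm (Fin n)) (π : Equiv.Perm (Fin n))).trans
      (Equiv.sumComm (Fin n) (Fin n))
  have key : S (Sum.inr (π i)) ∘ σ = S (Sum.inl i) := by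
    funext j
    cases j with
    | inl j =>
        simp [σ, hS, Matrix.fromBlocks, hS₂' i j]
    | inr j =>
        simp [σ, hS, Matrix.fromBlocks]
  calc E (S (Sum.inl i)) = E (S (Sum.inr (π i)) ∘ σ) := by rw [key]
    _ = E (S (Sum.inr (π i))) := hE σ _
end

section
/- Let π be a permutation of Fin n with permutation matrix P, let S₁ ∈ Matrix (Fin n) (Fin n) ℝ, let S₂ = P * S₁ * Pᵀ, and let S = Matrix.fromBlocks S₁ 0 0 S₂. Then for every i ∈ Fin n and every t ∈ ℝ, the empirical characteristic functions of rows Sum.inl i and Sum.inr (π i) of S agree: ∑ over v ∈ Fin n ⊕ Fin n of Complex.exp (t * (S (Sum.inl i) v) * Complex.I) = ∑ over v ∈ Fin n ⊕ Fin n of Complex.exp (t * (S (Sum.inr (π i)) v) * Complex.I). -/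
open Matrix

theorem cfs_identical_for_automorphic_nodes (n : ℕ) (π : Equiv.Perm (Fin n))
    (P : Matrix (Fin n) (Fin n) ℝ)
    (hP : ∀ i j, P i j = if i = π j then 1 else 0)
    (S₁ S₂ : Matrix (Fin n) (Fin n) ℝ) (hS₂ : S₂ = P * S₁ * Pᵀ)
    (S : Matrix (Fin n ⊕ Fin n) (Fin n ⊕ Fin n) ℝ)
    (hS : S = Matrix.fromBlocks S₁ 0 0 S₂)
    (i : Fin n) (t : ℝ) :
    ∑ v : Fin n ⊕ Fin n, Complex.exp ((t : ℂ) * (S (Sum.inl i) v : ℂ) * Complex.I)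
      = ∑ v : Fin n ⊕ Fin n,
          Complex.exp ((t : ℂ) * (S (Sum.inr (π i)) v : ℂ) * Complex.I) := by
  have hkey : ∀ a b : Fin n, S₂ (π a) (π b) = S₁ a b := by
    intro a b
    simp only [hS₂, Matrix.mul_apply, Matrix.transpose_apply, hP]
    rw [Finset.sum_eq_single b]
    · rw [Finset.sum_eq_single a]
      · simp
      · intro c _ hc
        have : ¬ (π a = π c) := fun h => hc (π.injective h).symm
        simp [this]
      · simp
    · intro c _ hc
      have : ¬ (π b = π c) := fun h => hc (π.injective h).symm
      simp [this, fun h => hc (π.injective h)]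
    · simp
  subst hS
  rw [Fintype.sum_sum_type, Fintype.sum_sum_type]
  simp only [Matrix.fromBlocks_apply₁₁, Matrix.fromBlocks_apply₁₂,
    Matrix.fromBlocks_apply₂₁, Matrix.fromBlocks_apply₂₂,
    Matrix.zero_apply, Complex.ofReal_zero, mul_zero, zero_mul, Complex.exp_zero]
  rw [add_comm]
  congr 1
  rw [← Equiv.sum_comp π (fun v => Complex.exp ((t : ℂ) * (S₂ (π i) v : ℂ) * Complex.I))]
  simp [hkey]
end
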